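/- arXiv:1110.5889 — 2 statements merged into one kernel-verified Lean document; each statement's English description precedes it below -/
import Mathlib

section
/- Suppose there exist stopping times $(\tau^*_i)_{i=1}^N$ and RCLL adapted processes $(W^i)_{i=1}^N$ such that, with $R_i=\min_{j\ne i}\tau^*_j$ and $R=\tau^*_i\wedge R_i$: (i) $(W^i_{t\wedge R})_t$ is a martingale and $(W^i_{t\wedge R_i})_t$ a supermartingale; (ii) $W^i_t 1_{\{t<R_i\}}\ge X^i_t 1_{\{t<R_i\}}$ for all $t$ and $W^i_{\tau^*_i}1_{\{\tau^*_i<R_i\}}=X^i_{\tau^*_i}1_{\{\tau^*_i<R_i\}}$; (iii) $W^i_{R_i}=Y^i_{R_i}1_{\{R_i<T\}}+Q^i_T 1_{\{R_i=T\}}$ and $(Y^i_{R_i}-Q^i_{R_i})1_{\{R_i=\tau^*_i<T\}}=0$. Then $(\tau^*_1,\dots,\tau^*_N)$ is a Nash equilibrium point for the nonzero-sum Dynkin game with payoffs $J_i$, and $J_i(\tau^*_1,\dots,\tau^*_N)=\mathbf{E}[W^i_0]$ for every $i$. -/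
open MeasureTheory Filter Topology

noncomputable section

/-- A real-valued process is RCLL: right-continuous with left limits. -/
def RCLL {Ω : Type*} (f : ℝ → Ω → ℝ) : Prop :=
  ∀ ω t, ContinuousWithinAt (fun s => f s ω) (Set.Ici t) t ∧
    ∃ l : ℝ, Filter.Tendsto (fun s => f s ω) (nhdsWithin t (Set.Iio t)) (nhds l)

/-- Class [D]: the family of values at `[0,T]`-valued stopping times is uniformly
integrable. -/
def ClassD {Ω : Type*} {m : MeasurableSpace Ω} (F : Filtration ℝ m) (μ : Measure Ω)
    (T : ℝ) (f : ℝ → Ω → ℝ) : Prop :=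
  UniformIntegrable
    (fun τ : {τ : Ω → ℝ // IsStoppingTime F (fun ω => (τ ω : WithTop ℝ)) ∧ ∀ ω, τ ω ∈ Set.Icc 0 T} =>
      fun ω => f (τ.1 ω) ω) 1 μ

/-- Payoff of player `i` in the `N`-player nonzero-sum Dynkin game for the tuple of
stopping times `Ts`, with `R_i = min_{j ≠ i} Ts j`. -/
def J {Ω : Type*} {m : MeasurableSpace Ω} (μ : Measure Ω) {N : ℕ}
    (X Q Y : Fin N → ℝ → Ω → ℝ) (i : Fin N) (Ts : Fin N → Ω → ℝ) : ℝ :=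
  ∫ ω,
    (if Ts i ω < ⨅ j : {j : Fin N // j ≠ i}, Ts j.1 ω then X i (Ts i ω) ω
     else if Ts i ω = ⨅ j : {j : Fin N // j ≠ i}, Ts j.1 ω then Q i (Ts i ω) ω
     else Y i (⨅ j : {j : Fin N // j ≠ i}, Ts j.1 ω) ω) ∂μ

/-!
Fix a player `i` and write `R = min_{j ≠ i} τ*_j`. Before `R` the process `W^i` dominates `X^i`,
and at `R` it equals `Y^i_R` or `Q^i_T`, which dominate `Q^i` by `X ≤ Q ≤ Y`; hence the payoff of
any deviation `θ` is at most `W^i_{θ ∧ R}`. Since `W^i` stopped at `R` is a supermartingale,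
`E W^i_{θ ∧ R} ≤ E W^i_0`: optional stopping gives this at grid-valued stopping times decreasing
to `θ ∧ R`, and right-continuity of `W^i` with a Fatou lemma, whose uniformly integrable minorant
is `X^i` sampled at those times (class [D]), passes it to the limit. For `θ = τ*_i` the payoff
equals `W^i` at `min_j τ*_j`, whose expectation is `E W^i_0` by the martingale property.
-/

def roundUp (d x : ℝ) : ℝ := ⌈x / d⌉₊ * d

section roundUp

variable {d x : ℝ}

theorem le_roundUp (hd : 0 < d) (x : ℝ) : x ≤ roundUp d x :=
  (div_le_iff₀ hd).1 (Nat.le_ceil _)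

theorem roundUp_lt_add (hd : 0 < d) (hx : 0 ≤ x) : roundUp d x < x + d := by
  have := Nat.ceil_lt_add_one (div_nonneg hx hd.le)
  calc roundUp d x < (x / d + 1) * d := by unfold roundUp; gcongr
    _ = x + d := by field_simp

theorem tendsto_roundUp_one_div (hx : 0 ≤ x) :
    Tendsto (fun n : ℕ => roundUp (1 / (n + 1)) x) atTop (𝓝[≥] x) := by
  have hpos : ∀ n : ℕ, (0 : ℝ) < 1 / (n + 1) := fun n => by positivity
  refine tendsto_nhdsWithin_of_tendsto_nhds_of_eventually_within _ ?_
    (Eventually.of_forall fun n => le_roundUp (hpos n) x)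
  refine tendsto_of_tendsto_of_tendsto_of_le_of_le tendsto_const_nhds ?_
    (fun n => le_roundUp (hpos n) x) fun n => (roundUp_lt_add (hpos n) hx).le
  simpa using (tendsto_one_div_add_atTop_nhds_zero_nat (𝕜 := ℝ)).const_add x

end roundUp

section Reals

variable {ι : Type*} [Finite ι] {f : ι → ℝ}

theorem ciInf_mem_Icc_zero {T : ℝ} (hT : 0 ≤ T) (hf : ∀ j, f j ∈ Set.Icc 0 T) :
    ⨅ j, f j ∈ Set.Icc 0 T := by
  cases isEmpty_or_nonempty ι with
  | inl _ => simpa [Real.iInf_of_isEmpty] using hT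
  | inr _ =>
    obtain ⟨j, hj⟩ := exists_eq_ciInf_of_finite (f := f)
    exact hj ▸ hf j

theorem min_ciInf_ne_eq_ciInf (i : ι) [Nonempty {j // j ≠ i}] :
    min (f i) (⨅ j : {j // j ≠ i}, f j) = ⨅ j, f j := by
  have : Nonempty ι := ⟨i⟩
  refine le_antisymm (le_ciInf fun j => ?_)
    (le_min (ciInf_le (Finite.bddBelow_range _) i)
      (le_ciInf fun j => ciInf_le (Finite.bddBelow_range _) j.1))
  by_cases hj : j = i
  · exact hj ▸ min_le_left _ _
  · exact (min_le_right _ _).trans (ciInf_le (Finite.bddBelow_range _) (⟨j, hj⟩ : {j // j ≠ i}))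

end Reals

/-- The integrand of `J`: the payoff for stopping at `s` when the first of the others stops
at `r`. -/
def stopPayoff (x q y : ℝ → ℝ) (s r : ℝ) : ℝ :=
  if s < r then x s else if s = r then q s else y r

section StopPayoff

variable {x q y w : ℝ → ℝ} {r s T : ℝ}

theorem reward_le_value (hxqy : ∀ t ≤ T, x t ≤ q t ∧ q t ≤ y t) (hdom : ∀ t < r, x t ≤ w t)
    (hwr : w r = if r < T then y r else q T) (hrT : r ≤ T) {t : ℝ} (ht : t ≤ r) :
    x t ≤ w t := by
  rcases ht.lt_or_eq with ht | rfl
  · exact hdom t ht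
  · rw [hwr]
    split_ifs with hrT'
    · exact (hxqy t hrT).1.trans (hxqy t hrT).2
    · obtain rfl := le_antisymm hrT (not_lt.1 hrT')
      exact (hxqy t le_rfl).1

theorem stopPayoff_le_value (hxqy : ∀ t ≤ T, x t ≤ q t ∧ q t ≤ y t) (hdom : ∀ t < r, x t ≤ w t)
    (hwr : w r = if r < T then y r else q T) (hrT : r ≤ T) (hsT : s ≤ T) :
    stopPayoff x q y s r ≤ w (min s r) := by
  unfold stopPayoff
  rcases lt_trichotomy s r with hsr | rfl | hrs
  · rw [if_pos hsr, min_eq_left hsr.le]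
    exact hdom s hsr
  · rw [if_neg (lt_irrefl s), if_pos rfl, min_self, hwr]
    split_ifs with hsT'
    · exact (hxqy s hrT).2
    · rw [le_antisymm hrT (not_lt.1 hsT')]
  · rw [if_neg hrs.not_gt, if_neg hrs.ne', min_eq_right hrs.le, hwr, if_pos (hrs.trans_le hsT)]

theorem stopPayoff_eq_value (hstop : s < r → w s = x s) (hwr : w r = if r < T then y r else q T)
    (hyq : r = s ∧ r < T → y r = q r) (hrT : r ≤ T) (hsT : s ≤ T) :
    stopPayoff x q y s r = w (min s r) := by
  unfold stopPayoff
  rcases lt_trichotomy s r with hsr | rfl | hrs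
  · rw [if_pos hsr, min_eq_left hsr.le, hstop hsr]
  · rw [if_neg (lt_irrefl s), if_pos rfl, min_self, hwr]
    split_ifs with hsT'
    · exact (hyq ⟨rfl, hsT'⟩).symm
    · rw [le_antisymm hrT (not_lt.1 hsT')]
  · rw [if_neg hrs.not_gt, if_neg hrs.ne', min_eq_right hrs.le, hwr, if_pos (hrs.trans_le hsT)]

end StopPayoff

namespace MeasureTheory

section UnifIntegrable

variable {α ι κ : Type*} {m : MeasurableSpace α} {μ : Measure α}

theorem UnifIntegrable.of_norm_le {β γ : Type*} [NormedAddCommGroup β] [NormedAddCommGroup γ]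
    {p : ENNReal} {f : ι → α → β} {g : ι → α → γ} (hg : UnifIntegrable g p μ)
    (hfg : ∀ i, ∀ᵐ x ∂μ, ‖f i x‖ ≤ ‖g i x‖) : UnifIntegrable f p μ := by
  intro ε hε
  obtain ⟨δ, hδ, hgδ⟩ := hg hε
  refine ⟨δ, hδ, fun i s hs hμs => (eLpNorm_mono_ae ?_).trans (hgδ i s hs hμs)⟩
  filter_upwards [hfg i] with x hx
  by_cases hxs : x ∈ s <;> simp [hxs, hx]

theorem UnifIntegrable.comp {β : Type*} [NormedAddCommGroup β] {p : ENNReal} {f : ι → α → β}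
    (hf : UnifIntegrable f p μ) (φ : κ → ι) : UnifIntegrable (fun k => f (φ k)) p μ := by
  intro ε hε
  obtain ⟨δ, hδ, hfδ⟩ := hf hε
  exact ⟨δ, hδ, fun k => hfδ (φ k)⟩

/-- Fatou's lemma with a uniformly integrable minorant in place of a fixed integrable one. -/
theorem integral_le_of_tendsto_of_unifIntegrable_le [IsFiniteMeasure μ]
    {f l : ℕ → α → ℝ} {h H : α → ℝ} {c : ℝ}
    (hf : ∀ n, Integrable (f n) μ) (hl : UnifIntegrable l 1 μ)
    (hl_meas : ∀ n, AEStronglyMeasurable (l n) μ) (hh : Integrable h μ)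
    (hlf : ∀ n, l n ≤ᵐ[μ] f n) (hfH : ∀ᵐ x ∂μ, Tendsto (fun n => f n x) atTop (𝓝 (H x)))
    (hhH : h ≤ᵐ[μ] H) (hc : ∀ n, ∫ x, f n x ∂μ ≤ c) : ∫ x, h x ∂μ ≤ c := by
  -- `min (f n) h` tends to `h`, and is dominated by `|l n| + |h|`, so Vitali applies.
  set k : ℕ → α → ℝ := fun n x => min (f n x) (h x)
  have hk : ∀ n, Integrable (k n) μ := fun n => (hf n).inf hh
  have hdom : UnifIntegrable (fun n x => |l n x| + |h x|) 1 μ :=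
    (hl.of_norm_le (f := fun n x => |l n x|) fun n => by simp).add
      (unifIntegrable_const le_rfl ENNReal.one_ne_top (memLp_one_iff_integrable.2 hh.abs))
      le_rfl (fun n => (hl_meas n).norm) fun _ => hh.abs.aestronglyMeasurable
  have hk_ui : UnifIntegrable k 1 μ := hdom.of_norm_le fun n => by
    filter_upwards [hlf n] with x hx
    simp only [Real.norm_eq_abs, k]
    refine (abs_le.2 ⟨?_, ?_⟩).trans (le_abs_self _)
    · have := neg_abs_le (l n x); have := neg_abs_le (h x)
      exact le_min (by linarith [abs_nonneg (h x)]) (by linarith [abs_nonneg (l n x)])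
    · exact (min_le_right _ _).trans ((le_abs_self _).trans (le_add_of_nonneg_left (abs_nonneg _)))
  have hk_lim : ∀ᵐ x ∂μ, Tendsto (fun n => k n x) atTop (𝓝 (h x)) := by
    filter_upwards [hfH, hhH] with x hx hhx
    simpa [min_eq_right hhx] using hx.min (tendsto_const_nhds (x := h x))
  have hk_int : Tendsto (fun n => ∫ x, k n x ∂μ) atTop (𝓝 (∫ x, h x ∂μ)) :=
    tendsto_integral_of_L1' h hh.aestronglyMeasurable (Eventually.of_forall hk)
      (tendsto_Lp_finite_of_tendsto_ae le_rfl ENNReal.one_ne_top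
        (fun n => (hk n).aestronglyMeasurable) (memLp_one_iff_integrable.2 hh) hk_ui hk_lim)
  exact le_of_tendsto' hk_int fun n =>
    (integral_mono (hk n) (hf n) fun x => min_le_left _ _).trans (hc n)

end UnifIntegrable

variable {Ω : Type*} {m : MeasurableSpace Ω} {μ : Measure Ω} {F : Filtration ℝ m}
  {d : ℝ} {θ : Ω → ℝ}

def Filtration.onGrid (F : Filtration ℝ m) (hd : 0 ≤ d) : Filtration ℕ m where
  seq k := F (k * d)
  mono' _ _ hkl := F.mono (by gcongr)
  le' _ := F.le _

theorem Supermartingale.onGrid {M : ℝ → Ω → ℝ} (hM : Supermartingale M F μ) (hd : 0 ≤ d) :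
    Supermartingale (fun k : ℕ => M (k * d)) (F.onGrid hd) μ :=
  ⟨fun k => hM.1 _, fun _ _ hkl => hM.2.1 _ _ (by gcongr), fun _ => hM.2.2 _⟩

theorem isStoppingTime_natCeil_div (hθ : IsStoppingTime F fun ω => (θ ω : WithTop ℝ))
    (hd : 0 < d) : IsStoppingTime (F.onGrid hd.le) fun ω => (⌈θ ω / d⌉₊ : WithTop ℕ) := by
  intro k
  have hset : {ω | (⌈θ ω / d⌉₊ : WithTop ℕ) ≤ k}
      = {ω | (θ ω : WithTop ℝ) ≤ ((k * d : ℝ) : WithTop ℝ)} := by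
    ext ω
    rw [Set.mem_ofPred_eq, Set.mem_ofPred_eq, Nat.cast_le, WithTop.coe_le_coe, Nat.ceil_le,
      div_le_iff₀ hd]
  change MeasurableSet[F (k * d)] {ω | (⌈θ ω / d⌉₊ : WithTop ℕ) ≤ k}
  rw [hset]
  exact hθ _

theorem isStoppingTime_roundUp (hθ : IsStoppingTime F fun ω => (θ ω : WithTop ℝ))
    (hd : 0 < d) : IsStoppingTime F fun ω => (roundUp d (θ ω) : WithTop ℝ) := by
  intro t
  rcases lt_or_ge t 0 with ht | ht
  · convert @MeasurableSet.empty _ (F t)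
    ext ω
    simp only [Set.mem_ofPred_eq, WithTop.coe_le_coe, Set.mem_empty_iff_false, iff_false, not_le]
    exact ht.trans_le (by unfold roundUp; positivity)
  · have hset : {ω | (roundUp d (θ ω) : WithTop ℝ) ≤ t}
        = {ω | (θ ω : WithTop ℝ) ≤ ((⌊t / d⌋₊ * d : ℝ))} := by
      ext ω
      simp only [Set.mem_ofPred_eq, WithTop.coe_le_coe, roundUp]
      rw [← le_div_iff₀ hd, ← Nat.le_floor_iff (div_nonneg ht hd.le), Nat.ceil_le,
        div_le_iff₀ hd]
    rw [hset]
    exact F.mono ((le_div_iff₀ hd).1 (Nat.floor_le (div_nonneg ht hd.le))) _ (hθ _)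

theorem natCeil_div_le_of_le {C : ℝ} (hd : 0 < d) (hθC : ∀ ω, θ ω ≤ C) (ω : Ω) :
    (⌈θ ω / d⌉₊ : WithTop ℕ) ≤ (⌈C / d⌉₊ : ℕ) :=
  WithTop.coe_le_coe.2 (Nat.ceil_mono (by gcongr; exact hθC ω))

theorem Supermartingale.integrable_roundUp {M : ℝ → Ω → ℝ} (hM : Supermartingale M F μ)
    (hθ : IsStoppingTime F fun ω => (θ ω : WithTop ℝ)) (hd : 0 < d) {C : ℝ}
    (hθC : ∀ ω, θ ω ≤ C) : Integrable (fun ω => M (roundUp d (θ ω)) ω) μ :=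
  integrable_stoppedValue ℕ (isStoppingTime_natCeil_div hθ hd) (hM.onGrid hd.le).integrable
    (natCeil_div_le_of_le hd hθC)

theorem Supermartingale.integral_roundUp_le [IsFiniteMeasure μ] {M : ℝ → Ω → ℝ}
    (hM : Supermartingale M F μ) (hθ : IsStoppingTime F fun ω => (θ ω : WithTop ℝ))
    (hd : 0 < d) {C : ℝ} (hθC : ∀ ω, θ ω ≤ C) :
    ∫ ω, M (roundUp d (θ ω)) ω ∂μ ≤ ∫ ω, M 0 ω ∂μ := by
  have := (hM.onGrid hd.le).neg.expected_stoppedValue_mono (isStoppingTime_const _ 0)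
    (isStoppingTime_natCeil_div hθ hd) (fun ω => WithTop.coe_le_coe.2 (Nat.zero_le _))
    (natCeil_div_le_of_le hd hθC)
  change ∫ ω, -M ((0 : ℕ) * d) ω ∂μ ≤ ∫ ω, -M (roundUp d (θ ω)) ω ∂μ at this
  simpa [integral_neg] using this

theorem IsStoppingTime.measurable_real (hθ : IsStoppingTime F fun ω => (θ ω : WithTop ℝ)) :
    Measurable θ :=
  measurable_of_Iic fun t => F.le t _
    (by simpa only [WithTop.coe_le_coe] using hθ t : MeasurableSet[F t] {ω | θ ω ≤ t})

theorem isStoppingTime_ciInf {ι : Type*} [Finite ι] {τ : ι → Ω → ℝ}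
    (hτ : ∀ j, IsStoppingTime F fun ω => (τ j ω : WithTop ℝ)) :
    IsStoppingTime F fun ω => ((⨅ j, τ j ω : ℝ) : WithTop ℝ) := by
  cases isEmpty_or_nonempty ι with
  | inl _ =>
    simpa only [Real.iInf_of_isEmpty] using isStoppingTime_const F 0
  | inr _ =>
    intro t
    have hset : {ω | ((⨅ j, τ j ω : ℝ) : WithTop ℝ) ≤ t}
        = ⋃ j, {ω | (τ j ω : WithTop ℝ) ≤ t} := by
      ext ω
      simp only [Set.mem_ofPred_eq, Set.mem_iUnion, WithTop.coe_le_coe]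
      refine ⟨fun h => ?_, fun ⟨j, hj⟩ => (ciInf_le (Finite.bddBelow_range _) j).trans hj⟩
      obtain ⟨j, hj⟩ := exists_eq_ciInf_of_finite (f := fun j => τ j ω)
      exact ⟨j, hj ▸ h⟩
    rw [hset]
    exact MeasurableSet.iUnion fun j => hτ j t

variable {T : ℝ} {f : ℝ → Ω → ℝ}

theorem ClassD.integrable (hf : ClassD F μ T f) {σ : Ω → ℝ}
    (hσ : IsStoppingTime F fun ω => (σ ω : WithTop ℝ)) (hσT : ∀ ω, σ ω ∈ Set.Icc 0 T) :
    Integrable (fun ω => f (σ ω) ω) μ :=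
  memLp_one_iff_integrable.1 (hf.memLp ⟨σ, hσ, hσT⟩)

theorem ClassD.unifIntegrable (hf : ClassD F μ T f) {κ : Type*} {σ : κ → Ω → ℝ}
    (hσ : ∀ n, IsStoppingTime F fun ω => (σ n ω : WithTop ℝ))
    (hσT : ∀ n ω, σ n ω ∈ Set.Icc 0 T) : UnifIntegrable (fun n ω => f (σ n ω) ω) 1 μ :=
  hf.unifIntegrable.comp fun n => ⟨σ n, hσ n, hσT n⟩

theorem integrable_stopPayoff {x q y : ℝ → Ω → ℝ} {s r : Ω → ℝ} (hs : Measurable s)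
    (hr : Measurable r) (hx : Integrable (fun ω => x (s ω) ω) μ)
    (hq : Integrable (fun ω => q (s ω) ω) μ) (hy : Integrable (fun ω => y (r ω) ω) μ) :
    Integrable (fun ω => stopPayoff (x · ω) (q · ω) (y · ω) (s ω) (r ω)) μ := by
  classical
  refine (Integrable.piecewise (measurableSet_lt hs hr) hx.integrableOn
    (Integrable.piecewise (measurableSet_eq_fun hs hr) hq.integrableOn
      hy.integrableOn).integrableOn).congr (Eventually.of_forall fun ω => ?_)
  simp only [Set.piecewise, Set.mem_ofPred_eq, stopPayoff]

theorem integral_stopPayoff_le [IsFiniteMeasure μ] {x q y w : ℝ → Ω → ℝ} {R θ : Ω → ℝ}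
    (hx : ClassD F μ T x) (hq : ClassD F μ T q) (hy : ClassD F μ T y)
    (hxqy : ∀ᵐ ω ∂μ, ∀ t ≤ T, x t ω ≤ q t ω ∧ q t ω ≤ y t ω)
    (hR : IsStoppingTime F fun ω => (R ω : WithTop ℝ)) (hRT : ∀ ω, R ω ∈ Set.Icc 0 T)
    (hθ : IsStoppingTime F fun ω => (θ ω : WithTop ℝ)) (hθT : ∀ ω, θ ω ∈ Set.Icc 0 T)
    (hw : RCLL w) (hsuper : Supermartingale (fun t ω => w (min t (R ω)) ω) F μ)
    (hdom : ∀ᵐ ω ∂μ, ∀ t < R ω, x t ω ≤ w t ω)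
    (hwR : ∀ᵐ ω ∂μ, w (R ω) ω = if R ω < T then y (R ω) ω else q T ω) :
    ∫ ω, stopPayoff (x · ω) (q · ω) (y · ω) (θ ω) (R ω) ∂μ ≤ ∫ ω, w 0 ω ∂μ := by
  have hd : ∀ n : ℕ, (0 : ℝ) < 1 / (n + 1) := fun n => by positivity
  set σ : ℕ → Ω → ℝ := fun n ω => min (roundUp (1 / (n + 1)) (θ ω)) (R ω)
  have hσ : ∀ n, IsStoppingTime F fun ω => (σ n ω : WithTop ℝ) := fun n => by
    simpa only [σ, WithTop.coe_min] using (isStoppingTime_roundUp hθ (hd n)).min hR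
  have hσT : ∀ n ω, σ n ω ∈ Set.Icc 0 T := fun n ω =>
    ⟨le_min ((hθT ω).1.trans (le_roundUp (hd n) _)) (hRT ω).1, (min_le_right _ _).trans (hRT ω).2⟩
  have hθT' : ∀ ω, θ ω ≤ T := fun ω => (hθT ω).2
  have hw0 : ∫ ω, w (min 0 (R ω)) ω ∂μ = ∫ ω, w 0 ω ∂μ := by
    simp only [fun ω => min_eq_left (hRT ω).1]
  refine integral_le_of_tendsto_of_unifIntegrable_le (f := fun n ω => w (σ n ω) ω)
    (H := fun ω => w (min (θ ω) (R ω)) ω) (fun n => hsuper.integrable_roundUp hθ (hd n) hθT')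
    (hx.unifIntegrable hσ hσT)
    (fun n => (hx.integrable (hσ n) (hσT n)).aestronglyMeasurable)
    (integrable_stopPayoff hθ.measurable_real hR.measurable_real (hx.integrable hθ hθT)
      (hq.integrable hθ hθT) (hy.integrable hR hRT))
    (fun n => ?_) (Eventually.of_forall fun ω => ?_) ?_ fun n =>
      (hsuper.integral_roundUp_le hθ (hd n) hθT').trans hw0.le
  · filter_upwards [hxqy, hdom, hwR] with ω hxqy hdom hwR
    exact reward_le_value hxqy hdom hwR (hRT ω).2 (min_le_right _ _)
  · obtain ⟨hlim, hge⟩ := tendsto_nhdsWithin_iff.1 (tendsto_roundUp_one_div (hθT ω).1)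
    refine (hw ω _).1.tendsto.comp (tendsto_nhdsWithin_iff.2 ⟨hlim.min tendsto_const_nhds, ?_⟩)
    exact hge.mono fun n hn => Set.mem_Ici.2 (min_le_min hn le_rfl)
  · filter_upwards [hxqy, hdom, hwR] with ω hxqy hdom hwR
    exact stopPayoff_le_value hxqy hdom hwR (hRT ω).2 (hθT ω).2

theorem integral_min_ciInf_ne_eq [IsFiniteMeasure μ] {ι : Type*} [Finite ι] {τ : ι → Ω → ℝ}
    {w : ℝ → Ω → ℝ} (hT : 0 ≤ T) (hτT : ∀ j ω, τ j ω ∈ Set.Icc 0 T)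
    (hmart : Martingale (fun t ω => w (min t (⨅ j, τ j ω)) ω) F μ) (i : ι) :
    ∫ ω, w (min (τ i ω) (⨅ j : {j // j ≠ i}, τ j ω)) ω ∂μ = ∫ ω, w 0 ω ∂μ := by
  cases isEmpty_or_nonempty {j // j ≠ i} with
  | inl _ => simp only [Real.iInf_of_isEmpty, fun ω => min_eq_right (hτT i ω).1]
  | inr _ =>
    have hR : ∀ ω, ⨅ j, τ j ω ∈ Set.Icc 0 T := fun ω => ciInf_mem_Icc_zero hT fun j => hτT j ω
    calc ∫ ω, w (min (τ i ω) (⨅ j : {j // j ≠ i}, τ j ω)) ω ∂μ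
        = ∫ ω, w (min T (⨅ j, τ j ω)) ω ∂μ := by
          congr with ω
          exact congrArg (w · ω)
            ((min_ciInf_ne_eq_ciInf (f := (τ · ω)) i).trans (min_eq_right (hR ω).2).symm)
      _ = ∫ ω, w (min 0 (⨅ j, τ j ω)) ω ∂μ := by
          simpa only [setIntegral_univ] using (hmart.setIntegral_eq hT MeasurableSet.univ).symm
      _ = ∫ ω, w 0 ω ∂μ := by simp only [fun ω => min_eq_left (hR ω).1]

end MeasureTheory

open MeasureTheory

theorem J_eq_integral_stopPayoff {Ω : Type*} {m : MeasurableSpace Ω} (μ : Measure Ω) {N : ℕ}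
    (X Q Y : Fin N → ℝ → Ω → ℝ) (i : Fin N) (Ts : Fin N → Ω → ℝ) :
    J μ X Q Y i Ts = ∫ ω, stopPayoff (X i · ω) (Q i · ω) (Y i · ω) (Ts i ω)
      (⨅ j : {j : Fin N // j ≠ i}, Ts j.1 ω) ∂μ := rfl

theorem J_update_self {Ω : Type*} {m : MeasurableSpace Ω} (μ : Measure Ω) {N : ℕ}
    (X Q Y : Fin N → ℝ → Ω → ℝ) (i : Fin N) (Ts : Fin N → Ω → ℝ) (θ : Ω → ℝ) :
    J μ X Q Y i (Function.update Ts i θ) = ∫ ω, stopPayoff (X i · ω) (Q i · ω) (Y i · ω) (θ ω)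
      (⨅ j : {j : Fin N // j ≠ i}, Ts j.1 ω) ∂μ := by
  simp only [J_eq_integral_stopPayoff, Function.update_self,
    fun j : {j : Fin N // j ≠ i} => Function.update_of_ne j.2 θ Ts]

theorem stmt3_general {Ω : Type*} {m : MeasurableSpace Ω} (μ : Measure Ω) [IsProbabilityMeasure μ]
    (F : Filtration ℝ m) (T : ℝ) (hT : 0 ≤ T) (N : ℕ)
    (X Q Y : Fin N → ℝ → Ω → ℝ)
    (hD : ∀ i, ClassD F μ T (X i) ∧ ClassD F μ T (Q i) ∧ ClassD F μ T (Y i))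
    (hXQY : ∀ i, ∀ᵐ ω ∂μ, ∀ t, t ≤ T → X i t ω ≤ Q i t ω ∧ Q i t ω ≤ Y i t ω)
    (τstar : Fin N → Ω → ℝ) (hst : ∀ i, IsStoppingTime F (fun ω => (τstar i ω : WithTop ℝ)))
    (hτT : ∀ i ω, τstar i ω ∈ Set.Icc 0 T)
    (Wp : Fin N → ℝ → Ω → ℝ) (hWrc : ∀ i, RCLL (Wp i))
    (hmart : ∀ i, Martingale (fun t ω => Wp i (min t (⨅ j, τstar j ω)) ω) F μ)
    (hsuper : ∀ i, Supermartingale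
      (fun t ω => Wp i (min t (⨅ j : {j : Fin N // j ≠ i}, τstar j.1 ω)) ω) F μ)
    (hdom : ∀ i, ∀ᵐ ω ∂μ, ∀ t,
      t < (⨅ j : {j : Fin N // j ≠ i}, τstar j.1 ω) → X i t ω ≤ Wp i t ω)
    (heq : ∀ i, ∀ᵐ ω ∂μ, τstar i ω < (⨅ j : {j : Fin N // j ≠ i}, τstar j.1 ω) →
      Wp i (τstar i ω) ω = X i (τstar i ω) ω)
    (hiii1 : ∀ i, ∀ᵐ ω ∂μ,
      Wp i (⨅ j : {j : Fin N // j ≠ i}, τstar j.1 ω) ω =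
        (if (⨅ j : {j : Fin N // j ≠ i}, τstar j.1 ω) < T
         then Y i (⨅ j : {j : Fin N // j ≠ i}, τstar j.1 ω) ω else Q i T ω))
    (hiii2 : ∀ i, ∀ᵐ ω ∂μ,
      ((⨅ j : {j : Fin N // j ≠ i}, τstar j.1 ω) = τstar i ω ∧
        (⨅ j : {j : Fin N // j ≠ i}, τstar j.1 ω) < T) →
      Y i (⨅ j : {j : Fin N // j ≠ i}, τstar j.1 ω) ω =
        Q i (⨅ j : {j : Fin N // j ≠ i}, τstar j.1 ω) ω) :
    (∀ i (θ : Ω → ℝ), IsStoppingTime F (fun ω => (θ ω : WithTop ℝ)) → (∀ ω, θ ω ∈ Set.Icc 0 T) →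
      J μ X Q Y i (Function.update τstar i θ) ≤ J μ X Q Y i τstar) ∧
    ∀ i, J μ X Q Y i τstar = ∫ ω, Wp i 0 ω ∂μ := by
  have hR : ∀ i, IsStoppingTime F fun ω =>
      ((⨅ j : {j : Fin N // j ≠ i}, τstar j.1 ω : ℝ) : WithTop ℝ) :=
    fun i => isStoppingTime_ciInf fun j => hst j.1
  have hRT : ∀ i ω, (⨅ j : {j : Fin N // j ≠ i}, τstar j.1 ω) ∈ Set.Icc 0 T :=
    fun i ω => ciInf_mem_Icc_zero hT fun j => hτT j.1 ω
  have hvalue : ∀ i, J μ X Q Y i τstar = ∫ ω, Wp i 0 ω ∂μ := by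
    intro i
    rw [J_eq_integral_stopPayoff, ← integral_min_ciInf_ne_eq hT hτT (hmart i) i]
    refine integral_congr_ae ?_
    filter_upwards [heq i, hiii1 i, hiii2 i] with ω hstop hwR hyq
    exact stopPayoff_eq_value (q := (Q i · ω)) (w := (Wp i · ω)) hstop hwR hyq (hRT i ω).2
      (hτT i ω).2
  refine ⟨fun i θ hθ hθT => ?_, hvalue⟩
  rw [hvalue i, J_update_self]
  exact integral_stopPayoff_le (hD i).1 (hD i).2.1 (hD i).2.2 (hXQY i) (hR i) (hRT i) hθ hθT
    (hWrc i) (hsuper i) (hdom i) (hiii1 i)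

/-- the streamline proposition — the verification hypotheses (i)-(iii)
imply that `(τ*_1, …, τ*_N)` is a Nash equilibrium point and
`J_i(τ*_1, …, τ*_N) = E[W^i_0]`. -/
theorem stmt3 {Ω : Type*} {m : MeasurableSpace Ω} (μ : Measure Ω) [IsProbabilityMeasure μ]
    (F : Filtration ℝ m) (T : ℝ) (hT : 0 ≤ T) (N : ℕ)
    (X Q Y : Fin N → ℝ → Ω → ℝ)
    (hprog : ∀ i, ProgMeasurable F (X i) ∧ ProgMeasurable F (Q i) ∧ ProgMeasurable F (Y i))
    (hD : ∀ i, ClassD F μ T (X i) ∧ ClassD F μ T (Q i) ∧ ClassD F μ T (Y i))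
    (hXQY : ∀ i, ∀ᵐ ω ∂μ, ∀ t, t ≤ T → X i t ω ≤ Q i t ω ∧ Q i t ω ≤ Y i t ω)
    (τstar : Fin N → Ω → ℝ) (hst : ∀ i, IsStoppingTime F (fun ω => (τstar i ω : WithTop ℝ)))
    (hτT : ∀ i ω, τstar i ω ∈ Set.Icc 0 T)
    (Wp : Fin N → ℝ → Ω → ℝ) (hWad : ∀ i, Adapted F (Wp i)) (hWrc : ∀ i, RCLL (Wp i))
    (hmart : ∀ i, Martingale (fun t ω => Wp i (min t (⨅ j, τstar j ω)) ω) F μ)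
    (hsuper : ∀ i, Supermartingale
      (fun t ω => Wp i (min t (⨅ j : {j : Fin N // j ≠ i}, τstar j.1 ω)) ω) F μ)
    (hdom : ∀ i, ∀ᵐ ω ∂μ, ∀ t,
      t < (⨅ j : {j : Fin N // j ≠ i}, τstar j.1 ω) → X i t ω ≤ Wp i t ω)
    (heq : ∀ i, ∀ᵐ ω ∂μ, τstar i ω < (⨅ j : {j : Fin N // j ≠ i}, τstar j.1 ω) →
      Wp i (τstar i ω) ω = X i (τstar i ω) ω)
    (hiii1 : ∀ i, ∀ᵐ ω ∂μ,
      Wp i (⨅ j : {j : Fin N // j ≠ i}, τstar j.1 ω) ω =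
        (if (⨅ j : {j : Fin N // j ≠ i}, τstar j.1 ω) < T
         then Y i (⨅ j : {j : Fin N // j ≠ i}, τstar j.1 ω) ω else Q i T ω))
    (hiii2 : ∀ i, ∀ᵐ ω ∂μ,
      ((⨅ j : {j : Fin N // j ≠ i}, τstar j.1 ω) = τstar i ω ∧
        (⨅ j : {j : Fin N // j ≠ i}, τstar j.1 ω) < T) →
      Y i (⨅ j : {j : Fin N // j ≠ i}, τstar j.1 ω) ω =
        Q i (⨅ j : {j : Fin N // j ≠ i}, τstar j.1 ω) ω) :
    (∀ i (θ : Ω → ℝ), IsStoppingTime F (fun ω => (θ ω : WithTop ℝ)) → (∀ ω, θ ω ∈ Set.Icc 0 T) →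
      J μ X Q Y i (Function.update τstar i θ) ≤ J μ X Q Y i τstar) ∧
    ∀ i, J μ X Q Y i τstar = ∫ ω, Wp i 0 ω ∂μ :=
  stmt3_general μ F T hT N X Q Y hD hXQY τstar hst hτT Wp hWrc hmart hsuper hdom heq hiii1 hiii2
end
end

section
/- In the scheme, fix $n\ge 2$ and distinct indices $i_1<\dots<i_k$ in $\{1,\dots,N\}$ ($k\ge 2$), with $R^*_I=\min\{T^*_j: j\notin I\}$ (and $\min\emptyset=T$). Define $A_n=\bigcap_{j=1}^k\{R^*_I>\tau_{Nn+i_j}\ge\theta_{Nn+i_j}\}$. Then $A_n\subseteq A_{n-1}$, and since $P[A_0]=P[A_1]=0$, one has $P[A_n]=0$ for all $n\ge 0$. -/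
open MeasureTheory Filter Topology

noncomputable section

/-- The predictable jumps of `f` are only nonnegative: along any announcing sequence of
stopping times the limsup of the values does not exceed the value at the limit. -/
def NoNegPredictableJumps {Ω : Type*} {m : MeasurableSpace Ω} (F : Filtration ℝ m)
    (μ : Measure Ω) (f : ℝ → Ω → ℝ) : Prop :=
  ∀ σ : Ω → ℝ, IsStoppingTime F (fun ω => (σ ω : WithTop ℝ)) →
    ∀ σs : ℕ → Ω → ℝ, (∀ n, IsStoppingTime F (fun ω => (σs n ω : WithTop ℝ))) →
      (∀ ω, Monotone fun n => σs n ω) →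
      (∀ ω, Tendsto (fun n => σs n ω) atTop (nhds (σ ω))) →
      (∀ ω n, σs n ω < σ ω) →
      ∀ᵐ ω ∂μ, Filter.limsup (fun n => f (σs n ω) ω) atTop ≤ f (σ ω) ω

/-- `Z` has the Snell-envelope property for `U`: for each time `t`, `Z t` is (a.e.) the
essential supremum over stopping times `τ ∈ [t,T]` of `E[U_τ | F_t]`. -/
def IsSnell {Ω : Type*} {m : MeasurableSpace Ω} (F : Filtration ℝ m) (μ : Measure Ω)
    (T : ℝ) (U Z : ℝ → Ω → ℝ) : Prop :=
  ∀ t : ℝ,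
    (∀ τ : Ω → ℝ, IsStoppingTime F (fun ω => (τ ω : WithTop ℝ)) → (∀ ω, τ ω ∈ Set.Icc t T) →
      μ[(fun ω => U (τ ω) ω)|F t] ≤ᵐ[μ] Z t) ∧
    (∀ ξ : Ω → ℝ,
      (∀ τ : Ω → ℝ, IsStoppingTime F (fun ω => (τ ω : WithTop ℝ)) → (∀ ω, τ ω ∈ Set.Icc t T) →
        μ[(fun ω => U (τ ω) ω)|F t] ≤ᵐ[μ] ξ) → Z t ≤ᵐ[μ] ξ)

/-- Player index associated with the step `n = Nq + i`, `1 ≤ i ≤ N` (as an element of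
`Fin N`, namely `i - 1`). -/
def idx (N : ℕ) (hN : 0 < N) (n : ℕ) : Fin N := ⟨(n - 1) % N, Nat.mod_lt _ hN⟩

/-- The approximating scheme of the `N`-player nonzero-sum Dynkin game:
`τ_1 = ⋯ = τ_N = T`; for `n ≥ N+1` (with `n = Nq + i`, `1 ≤ i ≤ N`),
`θ_n = min (τ_{n-1}, …, τ_{n-N+1})`,
`U^n_t = X^i_t 1_{t < θ_n} + (Q^i_T 1_{θ_n = T} + Y^i_{θ_n} 1_{θ_n < T}) 1_{t ≥ θ_n}`,
`W^n` is the Snell envelope of `U^n`, `μ_n = inf {s ≥ 0 : W^n_s = U^n_s}` and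
`τ_n = (μ_n ∧ τ_{n-N}) 1_{μ_n ∧ τ_{n-N} < θ_n} + τ_{n-N} 1_{μ_n ∧ τ_{n-N} ≥ θ_n}`. -/
structure Scheme {Ω : Type*} {m : MeasurableSpace Ω} (F : Filtration ℝ m) (μ : Measure Ω)
    (N : ℕ) (hN : 0 < N) (T : ℝ) (X Q Y : Fin N → ℝ → Ω → ℝ)
    (tau theta muS : ℕ → Ω → ℝ) (U W : ℕ → ℝ → Ω → ℝ) : Prop where
  tau_init : ∀ n, n ≤ N → ∀ ω, tau n ω = T
  tau_st : ∀ n, IsStoppingTime F (fun ω => (tau n ω : WithTop ℝ))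
  theta_def : ∀ n, 1 ≤ n → ∀ ω, theta n ω = ⨅ k : Fin (N - 1), tau (n - 1 - (k : ℕ)) ω
  U_def : ∀ n, N + 1 ≤ n → ∀ t ω, U n t ω =
    if t < theta n ω then X (idx N hN n) t ω
    else if theta n ω = T then Q (idx N hN n) T ω else Y (idx N hN n) (theta n ω) ω
  W_snell : ∀ n, N + 1 ≤ n → IsSnell F μ T (U n) (W n)
  W_rcll : ∀ n, N + 1 ≤ n → RCLL (W n)
  mu_def : ∀ n, N + 1 ≤ n → ∀ ω, muS n ω = sInf {s : ℝ | 0 ≤ s ∧ W n s ω = U n s ω}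
  mu_st : ∀ n, N + 1 ≤ n → IsStoppingTime F (fun ω => (muS n ω : WithTop ℝ))
  tau_rec : ∀ n, N + 1 ≤ n → ∀ ω, tau n ω =
    if min (muS n ω) (tau (n - N) ω) < theta n ω then min (muS n ω) (tau (n - N) ω)
    else tau (n - N) ω

/-- Assumptions (A1)-(A3) of the nonzero-sum Dynkin game, together with progressive
measurability and class [D] of the data. -/
structure GameA {Ω : Type*} {m : MeasurableSpace Ω} (F : Filtration ℝ m) (μ : Measure Ω)
    {N : ℕ} (T : ℝ) (X Q Y : Fin N → ℝ → Ω → ℝ) : Prop where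
  progX : ∀ i, ProgMeasurable F (X i)
  progQ : ∀ i, ProgMeasurable F (Q i)
  progY : ∀ i, ProgMeasurable F (Y i)
  dX : ∀ i, ClassD F μ T (X i)
  dQ : ∀ i, ClassD F μ T (Q i)
  dY : ∀ i, ClassD F μ T (Y i)
  a1 : ∀ i, RCLL (X i) ∧ NoNegPredictableJumps F μ (X i)
  a2 : ∀ i ω t, ContinuousWithinAt (fun s => Y i s ω) (Set.Ici t) t
  a3 : ∀ i, ∀ᵐ ω ∂μ, ∀ t, t ≤ T → X i t ω ≤ Q i t ω ∧ Q i t ω ≤ Y i t ω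

/-- Assumption (A4): for every stopping time `τ`, a.s.
`{Q^i_τ < Y^i_τ, τ < T} ⊆ ⋂_j {X^j_τ < Y^j_τ}`. -/
def A4 {Ω : Type*} {m : MeasurableSpace Ω} (F : Filtration ℝ m) (μ : Measure Ω)
    {N : ℕ} (T : ℝ) (X Q Y : Fin N → ℝ → Ω → ℝ) : Prop :=
  ∀ τ : Ω → ℝ, IsStoppingTime F (fun ω => (τ ω : WithTop ℝ)) → (∀ ω, τ ω ∈ Set.Icc 0 T) →
    ∀ i : Fin N, ∀ᵐ ω ∂μ,
      (Q i (τ ω) ω < Y i (τ ω) ω ∧ τ ω < T) →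
        ∀ j : Fin N, X j (τ ω) ω < Y j (τ ω) ω

/-! On the event `A_n` every player `i_j` of `I` has `θ ≤ τ` at step `Nn + i_j`, so the
recursion gives `τ_{Nn+i_j} = τ_{N(n-1)+i_j}`. The minimum `θ_{Nn+i_j}` is attained at a player
of `I`, because a player `r ∉ I` has `τ ≥ T*_r ≥ R*_I` along its whole residue class; hence every
player of `I` has another player of `I` whose `τ` at step `N(n-1)` is not larger. If some player
of `I` had `τ < θ` at step `N(n-1)`, the one among these with the smallest `τ` (largest index on
ties) would have `τ` strictly below every other player of `I`: the earlier players lie in its own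
window, the later ones either also have `τ < θ` or keep their value from step `N(n-2)`, which lies
in the window as well. So `A_n ⊆ A_{n-1}`, and nullity propagates from `A_1`. -/

theorem exists_forall_ne_lt_of_nonempty {ι α : Type*} [LinearOrder ι] [Finite ι] [LinearOrder α]
    (s : ι → α) (B : Set ι) (hB : B.Nonempty) (hlt : ∀ i ∈ B, ∀ j < i, s i < s j)
    (hgt : ∀ i ∈ B, ∀ j, i < j → j ∉ B → s i < s j) :
    ∃ i, ∀ j ≠ i, s i < s j := by
  -- a minimiser of `s` on `B`, the largest one among ties
  obtain ⟨i, hi, hmin⟩ :=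
    Set.exists_min_image B (fun i => toLex (s i, OrderDual.toDual i)) B.toFinite hB
  refine ⟨i, fun j hji => ?_⟩
  rcases hji.lt_or_gt with hj | hj
  · exact hlt i hi j hj
  by_cases hjB : j ∈ B
  · rcases Prod.Lex.toLex_le_toLex.1 (hmin j hjB) with h | ⟨-, h⟩
    · exact h
    · exact absurd (OrderDual.toDual_le_toDual.1 h) hj.not_ge
  · exact hgt i hi j hj hjB

theorem measure_eq_zero_of_subset_pred {Ω : Type*} {m : MeasurableSpace Ω} {μ : Measure Ω}
    {A : ℕ → Set Ω} (hsub : ∀ n, 2 ≤ n → A n ⊆ A (n - 1)) (h₀ : μ (A 0) = 0)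
    (h₁ : μ (A 1) = 0) (n : ℕ) : μ (A n) = 0 := by
  rcases Nat.lt_or_ge n 1 with hn | hn
  · obtain rfl : n = 0 := by omega
    exact h₀
  induction n, hn using Nat.le_induction with
  | base => exact h₁
  | succ n hn ih => exact measure_mono_null (hsub (n + 1) (by omega)) ih

/-- The scheme along a single path `ω`, with the times `μ_n` forgotten; `θ_n` is the minimum of
`τ` over the window `(n - N, n)`. -/
structure SchemePath (N : ℕ) (tau theta : ℕ → ℝ) : Prop where
  tau_le_sub : ∀ n, N + 1 ≤ n → tau n ≤ tau (n - N)
  theta_le : ∀ n m, n - N < m → m < n → theta n ≤ tau m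
  exists_theta_eq : ∀ n, N ≤ n → ∃ m, n - N < m ∧ m < n ∧ theta n = tau m
  eq_sub_of_theta_le : ∀ n, N + 1 ≤ n → theta n ≤ tau n → tau n = tau (n - N)

theorem Scheme.schemePath {Ω : Type*} {m : MeasurableSpace Ω} {F : Filtration ℝ m}
    {μ : Measure Ω} {N : ℕ} {hN : 0 < N} {T : ℝ} {X Q Y : Fin N → ℝ → Ω → ℝ}
    {tau theta muS : ℕ → Ω → ℝ} {U W : ℕ → ℝ → Ω → ℝ}
    (S : Scheme F μ N hN T X Q Y tau theta muS U W) (hN2 : 2 ≤ N) (ω : Ω) :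
    SchemePath N (tau · ω) (theta · ω) where
  tau_le_sub n hn := by
    rw [S.tau_rec n hn ω]
    split_ifs
    exacts [min_le_right _ _, le_rfl]
  theta_le n m h₁ h₂ := by
    rw [S.theta_def n (by omega)]
    refine (ciInf_le (Set.finite_range _).bddBelow ⟨n - 1 - m, by omega⟩).trans_eq ?_
    dsimp only
    congr 1
    omega
  exists_theta_eq n hn := by
    have : Nonempty (Fin (N - 1)) := ⟨⟨0, by omega⟩⟩
    obtain ⟨l, hl⟩ := Finite.exists_min fun l : Fin (N - 1) => tau (n - 1 - l) ω
    have hl' := l.2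
    refine ⟨n - 1 - l, by omega, by omega, ?_⟩
    rw [S.theta_def n (by omega)]
    exact le_antisymm (ciInf_le (Set.finite_range _).bddBelow l) (le_ciInf hl)
  eq_sub_of_theta_le n hn hθ := by
    have h := S.tau_rec n hn ω
    split_ifs at h with hlt
    · rw [h] at hθ
      exact absurd hlt (not_lt.2 hθ)
    · exact h

namespace SchemePath

variable {N k : ℕ} {tau theta : ℕ → ℝ} {ii : Fin k → ℕ} {R : ℝ}

theorem antitone_residue (P : SchemePath N tau theta) {r : ℕ} (hr : 1 ≤ r) :
    Antitone fun q => tau (N * q + r) := by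
  refine antitone_nat_of_succ_le fun q => ?_
  have h := P.tau_le_sub (N * q + N + r) (by omega)
  rwa [Nat.add_right_comm, Nat.add_sub_cancel, ← Nat.add_right_comm, ← Nat.mul_succ] at h

/-- Players outside `I` never drop below `R`, so the window minimum of a player of `I` is attained
at another player of `I`. -/
theorem exists_ne_le_of_forall_lt (P : SchemePath N tau theta)
    (hrange : ∀ j, 1 ≤ ii j ∧ ii j ≤ N) {M : ℕ}
    (hR : ∀ r, 1 ≤ r → r ≤ N → (∀ j, ii j ≠ r) → R ≤ tau (M + r) ∧ R ≤ tau (M + N + r))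
    (h : ∀ j, tau (M + N + ii j) < R ∧ theta (M + N + ii j) ≤ tau (M + N + ii j))
    (hstep : ∀ j, tau (M + N + ii j) = tau (M + ii j)) (j : Fin k) :
    ∃ j' ≠ j, tau (M + ii j') ≤ tau (M + ii j) := by
  have hj := hrange j
  obtain ⟨m, hm₁, hm₂, hθm⟩ := P.exists_theta_eq (M + N + ii j) (by omega)
  obtain ⟨r, hr₁, hrN, hm⟩ : ∃ r, 1 ≤ r ∧ r ≤ N ∧ (m = M + r ∨ m = M + N + r) := by
    rcases le_or_gt m (M + N) with hmN | hmN
    exacts [⟨m - M, by omega, by omega, .inl (by omega)⟩,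
      ⟨m - M - N, by omega, by omega, .inr (by omega)⟩]
  have hτm : tau m ≤ tau (M + ii j) := hstep j ▸ hθm ▸ (h j).2
  by_cases hr : ∃ j', ii j' = r
  · obtain ⟨j', rfl⟩ := hr
    refine ⟨j', fun hjj => ?_, ?_⟩
    · subst hjj
      omega
    · rcases hm with rfl | rfl
      exacts [hτm, hstep j' ▸ hτm]
  · push Not at hr
    have hlt := hstep j ▸ (h j).1
    rcases hm with rfl | rfl
    · exact absurd ((hR r hr₁ hrN hr).1.trans hτm) hlt.not_ge
    · exact absurd ((hR r hr₁ hrN hr).2.trans hτm) hlt.not_ge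

theorem forall_theta_le_of_exists_ne_le (P : SchemePath N tau theta) (hmono : StrictMono ii)
    (hrange : ∀ j, 1 ≤ ii j ∧ ii j ≤ N) {M : ℕ} (hM : N ≤ M)
    (hne : ∀ j, ∃ j' ≠ j, tau (M + ii j') ≤ tau (M + ii j)) (j : Fin k) :
    theta (M + ii j) ≤ tau (M + ii j) := by
  by_contra! hbad
  obtain ⟨j₁, hj₁⟩ := exists_forall_ne_lt_of_nonempty (fun j => tau (M + ii j))
    {j | tau (M + ii j) < theta (M + ii j)} ⟨j, hbad⟩
    (fun i hi j hji => by
      have := hmono hji; have := hrange i; have := hrange j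
      exact hi.trans_le (P.theta_le _ _ (by omega) (by omega)))
    (fun i hi j hij hjB => by
      have := hmono hij; have := hrange i; have := hrange j
      rw [P.eq_sub_of_theta_le _ (by omega) (not_lt.1 hjB)]
      exact hi.trans_le (P.theta_le _ _ (by omega) (by omega)))
  obtain ⟨j', hj', hle⟩ := hne j₁
  exact (hj₁ j' hj').not_ge hle

theorem forall_lt_and_theta_le_sub_one (P : SchemePath N tau theta) (hmono : StrictMono ii)
    (hrange : ∀ j, 1 ≤ ii j ∧ ii j ≤ N)
    (hR : ∀ r, 1 ≤ r → r ≤ N → (∀ j, ii j ≠ r) → ∀ q, R ≤ tau (N * q + r)) {n : ℕ} (hn : 2 ≤ n)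
    (h : ∀ j, tau (N * n + ii j) < R ∧ theta (N * n + ii j) ≤ tau (N * n + ii j)) (j : Fin k) :
    tau (N * (n - 1) + ii j) < R ∧ theta (N * (n - 1) + ii j) ≤ tau (N * (n - 1) + ii j) := by
  obtain ⟨M, hM, hNn, hNM⟩ : ∃ M, N * (n - 1) = M ∧ N * n = M + N ∧ N ≤ M :=
    ⟨_, rfl, by rw [← Nat.mul_succ]; congr 1; omega, Nat.le_mul_of_pos_right _ (by omega)⟩
  rw [hM]
  rw [hNn] at h
  have hR' (r) (hr₁ : 1 ≤ r) (hrN : r ≤ N) (hr : ∀ j, ii j ≠ r) :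
      R ≤ tau (M + r) ∧ R ≤ tau (M + N + r) :=
    ⟨hM ▸ hR r hr₁ hrN hr (n - 1), hNn ▸ hR r hr₁ hrN hr n⟩
  have hstep (j) : tau (M + N + ii j) = tau (M + ii j) := by
    simpa [Nat.add_right_comm M N] using P.eq_sub_of_theta_le _ (by have := hrange j; omega) (h j).2
  exact ⟨hstep j ▸ (h j).1, P.forall_theta_le_of_exists_ne_le hmono hrange hNM
    (P.exists_ne_le_of_forall_lt hrange hR' h hstep) j⟩

end SchemePath

theorem stmt14_general {Ω : Type*} {m : MeasurableSpace Ω} (μ : Measure Ω)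
    (F : Filtration ℝ m) (N : ℕ) (hN3 : 3 ≤ N) (hN : 0 < N) (T : ℝ)
    (X Q Y : Fin N → ℝ → Ω → ℝ)
    (tau theta muS : ℕ → Ω → ℝ) (U W : ℕ → ℝ → Ω → ℝ)
    (S : Scheme F μ N hN T X Q Y tau theta muS U W)
    (Tstar : ℕ → Ω → ℝ)
    (hTlim : ∀ k, 1 ≤ k → k ≤ N → ∀ ω,
      Tendsto (fun q => tau (N * q + k) ω) atTop (nhds (Tstar k ω)))
    (k : ℕ) (ii : Fin k → ℕ) (hmono : StrictMono ii)
    (hrange : ∀ j, 1 ≤ ii j ∧ ii j ≤ N)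
    (RI : Ω → ℝ)
    (hRI : ∀ ω,
      (({j : ℕ | 1 ≤ j ∧ j ≤ N ∧ ∀ l, ii l ≠ j}).Nonempty →
        RI ω = sInf ((fun j => Tstar j ω) '' {j : ℕ | 1 ≤ j ∧ j ≤ N ∧ ∀ l, ii l ≠ j})) ∧
      (¬ ({j : ℕ | 1 ≤ j ∧ j ≤ N ∧ ∀ l, ii l ≠ j}).Nonempty → RI ω = T))
    (hA0 : μ (⋂ j : Fin k, {ω : Ω |
      tau (N * 0 + ii j) ω < RI ω ∧ theta (N * 0 + ii j) ω ≤ tau (N * 0 + ii j) ω}) = 0)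
    (hA1 : μ (⋂ j : Fin k, {ω : Ω |
      tau (N * 1 + ii j) ω < RI ω ∧ theta (N * 1 + ii j) ω ≤ tau (N * 1 + ii j) ω}) = 0) :
    (∀ n, 2 ≤ n →
      (⋂ j : Fin k, {ω : Ω |
        tau (N * n + ii j) ω < RI ω ∧ theta (N * n + ii j) ω ≤ tau (N * n + ii j) ω})
      ⊆ ⋂ j : Fin k, {ω : Ω |
        tau (N * (n - 1) + ii j) ω < RI ω ∧
          theta (N * (n - 1) + ii j) ω ≤ tau (N * (n - 1) + ii j) ω}) ∧
    ∀ n, μ (⋂ j : Fin k, {ω : Ω |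
      tau (N * n + ii j) ω < RI ω ∧ theta (N * n + ii j) ω ≤ tau (N * n + ii j) ω}) = 0 := by
  have P := S.schemePath (by omega)
  have hR (ω r) (hr₁ : 1 ≤ r) (hrN : r ≤ N) (hr : ∀ j, ii j ≠ r) (q : ℕ) :
      RI ω ≤ tau (N * q + r) ω := by
    have hmem : r ∈ {j : ℕ | 1 ≤ j ∧ j ≤ N ∧ ∀ l, ii l ≠ j} := ⟨hr₁, hrN, hr⟩
    have hfin : {j : ℕ | 1 ≤ j ∧ j ≤ N ∧ ∀ l, ii l ≠ j}.Finite :=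
      (Set.finite_Icc 1 N).subset fun j hj => ⟨hj.1, hj.2.1⟩
    calc RI ω = sInf ((fun j => Tstar j ω) '' {j : ℕ | 1 ≤ j ∧ j ≤ N ∧ ∀ l, ii l ≠ j}) :=
          (hRI ω).1 ⟨r, hmem⟩
      _ ≤ Tstar r ω := csInf_le (hfin.image _).bddBelow ⟨r, hmem, rfl⟩
      _ ≤ tau (N * q + r) ω := ((P ω).antitone_residue hr₁).le_of_tendsto (hTlim r hr₁ hrN ω) q
  refine ⟨?incl, measure_eq_zero_of_subset_pred ?incl hA0 hA1⟩
  intro n hn ω hω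
  simp only [Set.mem_iInter, Set.mem_setOf_eq] at hω ⊢
  exact (P ω).forall_lt_and_theta_le_sub_one hmono hrange (hR ω) hn hω

/-- Step 1 of Proposition 4.5: the events
`A_n = ⋂_{j=1}^k {R*_I > τ_{Nn+i_j} ≥ θ_{Nn+i_j}}` are decreasing and null. -/
theorem stmt14 {Ω : Type*} {m : MeasurableSpace Ω} (μ : Measure Ω) [IsProbabilityMeasure μ]
    (F : Filtration ℝ m) (N : ℕ) (hN3 : 3 ≤ N) (hN : 0 < N) (T : ℝ) (hT : 0 ≤ T)
    (X Q Y : Fin N → ℝ → Ω → ℝ) (hA : GameA F μ T X Q Y)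
    (tau theta muS : ℕ → Ω → ℝ) (U W : ℕ → ℝ → Ω → ℝ)
    (S : Scheme F μ N hN T X Q Y tau theta muS U W)
    (hprev : ∀ n, N + 1 ≤ n → ∀ ω, muS n ω ≤ tau (n - N) ω)
    (Tstar : ℕ → Ω → ℝ)
    (hTlim : ∀ k, 1 ≤ k → k ≤ N → ∀ ω,
      Tendsto (fun q => tau (N * q + k) ω) atTop (nhds (Tstar k ω)))
    (k : ℕ) (hk : 2 ≤ k) (ii : Fin k → ℕ) (hmono : StrictMono ii)
    (hrange : ∀ j, 1 ≤ ii j ∧ ii j ≤ N)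
    (RI : Ω → ℝ)
    (hRI : ∀ ω,
      (({j : ℕ | 1 ≤ j ∧ j ≤ N ∧ ∀ l, ii l ≠ j}).Nonempty →
        RI ω = sInf ((fun j => Tstar j ω) '' {j : ℕ | 1 ≤ j ∧ j ≤ N ∧ ∀ l, ii l ≠ j})) ∧
      (¬ ({j : ℕ | 1 ≤ j ∧ j ≤ N ∧ ∀ l, ii l ≠ j}).Nonempty → RI ω = T))
    (hA0 : μ (⋂ j : Fin k, {ω : Ω |
      tau (N * 0 + ii j) ω < RI ω ∧ theta (N * 0 + ii j) ω ≤ tau (N * 0 + ii j) ω}) = 0)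
    (hA1 : μ (⋂ j : Fin k, {ω : Ω |
      tau (N * 1 + ii j) ω < RI ω ∧ theta (N * 1 + ii j) ω ≤ tau (N * 1 + ii j) ω}) = 0) :
    (∀ n, 2 ≤ n →
      (⋂ j : Fin k, {ω : Ω |
        tau (N * n + ii j) ω < RI ω ∧ theta (N * n + ii j) ω ≤ tau (N * n + ii j) ω})
      ⊆ ⋂ j : Fin k, {ω : Ω |
        tau (N * (n - 1) + ii j) ω < RI ω ∧
          theta (N * (n - 1) + ii j) ω ≤ tau (N * (n - 1) + ii j) ω}) ∧
    ∀ n, μ (⋂ j : Fin k, {ω : Ω |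
      tau (N * n + ii j) ω < RI ω ∧ theta (N * n + ii j) ω ≤ tau (N * n + ii j) ω}) = 0 :=
  stmt14_general μ F N hN3 hN T X Q Y tau theta muS U W S Tstar hTlim k ii hmono hrange RI hRI hA0
    hA1
end
end
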